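/- Let G be a group with finite generating set X and H ≤ G with H ≤ ⟨Y⟩ for a finite set Y of words over X. Suppose G has decidable word problem and the distortion function Dist_{(G,X)}^{(H,Y)} is computable. Then the membership problem for (G, ⟨Y⟩ ∩ witnesses of H) is decidable in the following sense: an element g ∈ G given by a word w over X lies in H only if there is a word w' over Y with |w'| ≤ Dist_{(G,X)}^{(H,Y)}(|w|) representing g; in particular if H = ⟨Y⟩ then membership in H is decidable. -/

import Mathlib

/-- Word length of `g` with respect to the (symmetrized) set `S`. -/
noncomputable def wlen {G : Type*} [Group G] (S : Set G) (g : G) : ℕ :=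
  sInf {n | ∃ l : List G, (∀ x ∈ l, x ∈ S ∨ x⁻¹ ∈ S) ∧ l.prod = g ∧ l.length = n}

/-- Distortion function `Dist_{(G,X)}^{(H,Y)}(n) = max{|h|_Y : h ∈ H, |h|_X ≤ n}`. -/
noncomputable def distortion {G : Type*} [Group G] (X Y : Set G) (H : Subgroup G) (n : ℕ) : ℕ :=
  sSup {m | ∃ h ∈ H, wlen X h ≤ n ∧ wlen Y h = m}

/-- Evaluation of a word (letters with signs) over the generators `x`. -/
def evalWord {G : Type*} [Group G] {m : ℕ} (x : Fin m → G) (w : List (Fin m × Bool)) : G :=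
  (w.map fun p => if p.2 then x p.1 else (x p.1)⁻¹).prod

/-! If `H ≤ ⟨Y⟩` and the word `w` over `X` represents an element of `H`, then that element
has `X`-length at most `|w|`, hence `Y`-length at most `Dist(|w|)`: the distortion is a genuine
maximum because only finitely many elements have bounded `X`-length. When `H = ⟨Y⟩`, membership of
`w` is therefore decided by running through the finitely many words `w'` over `Y` of length at most
`Dist(|w|)` and asking the word problem whether `w'⁻¹ w = 1`. -/

section Words

variable {α : Type*}

def wordInv (w : List (α × Bool)) : List (α × Bool) :=
  (w.map fun p => (p.1, !p.2)).reverse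

noncomputable def wordsOfLengthLE [Fintype α] : ℕ → List (List α)
  | 0 => [[]]
  | n + 1 => [] :: (wordsOfLengthLE n).flatMap fun w => Finset.univ.toList.map (· :: w)

theorem mem_wordsOfLengthLE [Fintype α] {n : ℕ} {w : List α} :
    w ∈ wordsOfLengthLE n ↔ w.length ≤ n := by
  induction n generalizing w with
  | zero => simp [wordsOfLengthLE]
  | succ n ih => cases w <;> simp [wordsOfLengthLE, ih]

def expandWord {m m' : ℕ} (y : Fin m' → List (Fin m × Bool)) (w : List (Fin m' × Bool)) :
    List (Fin m × Bool) :=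
  w.flatMap fun p => if p.2 then y p.1 else wordInv (y p.1)

end Words

section Evaluation

variable {G : Type*} [Group G] {m : ℕ}

def evalLetter (x : Fin m → G) (p : Fin m × Bool) : G :=
  if p.2 then x p.1 else (x p.1)⁻¹

theorem evalWord_eq_prod_map (x : Fin m → G) (w : List (Fin m × Bool)) :
    evalWord x w = (w.map (evalLetter x)).prod :=
  rfl

theorem range_evalLetter (x : Fin m → G) :
    Set.range (evalLetter x) = Set.range x ∪ (Set.range x)⁻¹ := by
  ext g
  simp only [Set.mem_range, Set.mem_union, Set.mem_inv, Prod.exists, evalLetter]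
  constructor
  · rintro ⟨i, (_ | _), rfl⟩
    exacts [Or.inr ⟨i, by simp⟩, Or.inl ⟨i, rfl⟩]
  · rintro (⟨i, rfl⟩ | ⟨i, hi⟩)
    exacts [⟨i, true, rfl⟩, ⟨i, false, by simp [hi]⟩]

theorem evalWord_cons (x : Fin m → G) (p : Fin m × Bool) (w : List (Fin m × Bool)) :
    evalWord x (p :: w) = evalLetter x p * evalWord x w :=
  List.prod_cons

theorem evalWord_append (x : Fin m → G) (u v : List (Fin m × Bool)) :
    evalWord x (u ++ v) = evalWord x u * evalWord x v := by
  simp [evalWord_eq_prod_map]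

theorem evalWord_wordInv (x : Fin m → G) (w : List (Fin m × Bool)) :
    evalWord x (wordInv w) = (evalWord x w)⁻¹ := by
  simp only [evalWord_eq_prod_map, wordInv, List.prod_inv_reverse, List.map_reverse, List.map_map]
  congr 2
  refine List.map_congr_left fun ⟨i, b⟩ _ => ?_
  cases b <;> simp [evalLetter]

theorem evalWord_expandWord {m' : ℕ} (x : Fin m → G) (y : Fin m' → List (Fin m × Bool))
    (w : List (Fin m' × Bool)) :
    evalWord x (expandWord y w) = evalWord (fun i => evalWord x (y i)) w := by
  induction w with
  | nil => rfl
  | cons p w ih =>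
    rw [expandWord, List.flatMap_cons, evalWord_append, ← expandWord, ih, evalWord_cons]
    obtain ⟨i, _ | _⟩ := p <;> simp [evalLetter, evalWord_wordInv]

theorem evalWord_mem_closure (x : Fin m → G) (w : List (Fin m × Bool)) :
    evalWord x w ∈ Subgroup.closure (Set.range x) :=
  list_prod_mem fun g hg => by
    obtain ⟨p, -, rfl⟩ := List.mem_map.1 hg
    rcases (range_evalLetter x).le ⟨p, rfl⟩ with hx | hx
    exacts [Subgroup.subset_closure hx, inv_mem_iff.1 (Subgroup.subset_closure hx)]

theorem wlen_evalWord_le (x : Fin m → G) (w : List (Fin m × Bool)) :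
    wlen (Set.range x) (evalWord x w) ≤ w.length :=
  Nat.sInf_le ⟨w.map (evalLetter x), fun g hg => by
    obtain ⟨p, -, rfl⟩ := List.mem_map.1 hg
    exact (range_evalLetter x).le ⟨p, rfl⟩, rfl, List.length_map _⟩

end Evaluation

section WordLength

variable {G : Type*} [Group G] {m : ℕ}

theorem exists_evalWord_eq_of_mem_closure (x : Fin m → G) {g : G}
    (hg : g ∈ Subgroup.closure (Set.range x)) :
    ∃ w : List (Fin m × Bool), w.length = wlen (Set.range x) g ∧ evalWord x w = g := by
  have hne : {n | ∃ l : List G, (∀ a ∈ l, a ∈ Set.range x ∨ a⁻¹ ∈ Set.range x) ∧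
      l.prod = g ∧ l.length = n}.Nonempty := by
    rw [← Subgroup.mem_toSubmonoid, Subgroup.closure_toSubmonoid] at hg
    obtain ⟨l, hl, rfl⟩ := Submonoid.exists_list_of_mem_closure hg
    exact ⟨l.length, l, hl, rfl, rfl⟩
  obtain ⟨l, hl, rfl, hlen⟩ := Nat.sInf_mem hne
  obtain ⟨w, rfl⟩ : l ∈ Set.range (List.map (evalLetter x)) := by
    rw [Set.range_list_map]
    exact fun a ha => (range_evalLetter x).ge (hl a ha)
  exact ⟨w, (List.length_map _).symm.trans hlen, rfl⟩

theorem finite_setOf_wlen_le (x : Fin m → G) (n : ℕ) :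
    {g ∈ Subgroup.closure (Set.range x) | wlen (Set.range x) g ≤ n}.Finite := by
  refine ((List.finite_length_le _ n).image (evalWord x)).subset ?_
  rintro g ⟨hg, hn⟩
  obtain ⟨w, hw, rfl⟩ := exists_evalWord_eq_of_mem_closure x hg
  exact ⟨w, hw.trans_le hn, rfl⟩

/-- `distortion` is an `sSup` of naturals, which would be the junk value `0` were the set
unbounded; `finite_setOf_wlen_le` rules that out. -/
theorem wlen_le_distortion (x : Fin m → G) (Y : Set G) {H : Subgroup G}
    (hH : H ≤ Subgroup.closure (Set.range x)) {h : G} (hh : h ∈ H) {n : ℕ}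
    (hn : wlen (Set.range x) h ≤ n) :
    wlen Y h ≤ distortion (Set.range x) Y H n := by
  refine le_csSup (((finite_setOf_wlen_le x n).image (wlen Y)).bddAbove.mono ?_) ⟨h, hh, hn, rfl⟩
  rintro _ ⟨g, hg, hgn, rfl⟩
  exact ⟨g, ⟨hH hg, hgn⟩, rfl⟩

theorem exists_evalWord_eq_length_le_distortion {k : ℕ} (x : Fin m → G) (z : Fin k → G)
    {H : Subgroup G} (hHx : H ≤ Subgroup.closure (Set.range x))
    (hHz : H ≤ Subgroup.closure (Set.range z)) {w : List (Fin m × Bool)} (hw : evalWord x w ∈ H) :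
    ∃ w' : List (Fin k × Bool),
      w'.length ≤ distortion (Set.range x) (Set.range z) H w.length ∧
        evalWord z w' = evalWord x w := by
  obtain ⟨w', hlen, hw'⟩ := exists_evalWord_eq_of_mem_closure z (hHz hw)
  exact ⟨w', hlen ▸ wlen_le_distortion x _ hHx hw (wlen_evalWord_le x w), hw'⟩

end WordLength

section Computability

open Primrec

variable {α β γ : Type*} [Primcodable α] [Primcodable β]

theorem primrec_wordInv : Primrec (wordInv : List (α × Bool) → List (α × Bool)) :=
  list_reverse.comp <| list_map .id <| (fst.comp snd).pair (Primrec.not.comp (snd.comp snd)) |>.to₂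

theorem primrec_expandWord {m m' : ℕ} (y : Fin m' → List (Fin m × Bool)) :
    Primrec (expandWord y) :=
  list_flatMap .id
    ((dom_finite fun p : Fin m' × Bool => if p.2 then y p.1 else wordInv (y p.1)).comp snd).to₂

theorem primrec_wordsOfLengthLE [Fintype α] : Primrec (wordsOfLengthLE : ℕ → List (List α)) := by
  have hext : Primrec fun w : List α => Finset.univ.toList.map (· :: w) :=
    list_map (const _) (list_cons.comp snd fst)
  have hstep : Primrec₂ fun (_ : ℕ) (W : List (List α)) =>
      [] :: W.flatMap fun w => Finset.univ.toList.map (· :: w) :=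
    (list_cons.comp (const []) (list_flatMap snd (hext.comp snd).to₂)).to₂
  refine (nat_rec₁ [[]] hstep).of_eq ?_
  intro n
  induction n with
  | zero => rfl
  | succ n ih => simp [wordsOfLengthLE, ih]

theorem natRec_or_eq_true_iff (f : ℕ → Bool) (n : ℕ) :
    Nat.rec false (fun k acc => acc || f k) n = true ↔ ∃ k < n, f k = true := by
  induction n with
  | zero => simp
  | succ n ih =>
    simp only [Bool.or_eq_true, ih, Nat.lt_succ_iff_lt_or_eq, or_and_right, exists_or,
      exists_eq_left]

theorem Computable.list_any [Inhabited β] {f : α → List β} {p : α → β → Bool}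
    (hf : Computable f) (hp : Computable₂ p) : Computable fun a => (f a).any (p a) := by
  have hstep : Computable₂ fun a (s : ℕ × Bool) => s.2 || p a ((f a).getI s.1) :=
    (Primrec.or.to_comp.comp (Computable.snd.comp .snd) <|
      hp.comp .fst (Primrec.list_getI.to_comp.comp (hf.comp .fst) (Computable.fst.comp .snd))).to₂
  refine (Computable.nat_rec (Computable.list_length.comp hf) (Computable.const false) hstep).of_eq
    fun a => Bool.eq_iff_iff.2 ?_
  dsimp only
  rw [natRec_or_eq_true_iff, List.any_eq_true, List.exists_mem_iff_getElem]
  refine exists_congr fun k => ⟨fun ⟨hk, h⟩ => ⟨hk, ?_⟩, fun ⟨hk, h⟩ => ⟨hk, ?_⟩⟩ <;>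
    simpa [List.getI_eq_getElem _ ‹_›] using h

end Computability

section Search

variable {m m' : ℕ}

noncomputable def shortWordSearch (wp : List (Fin m × Bool) → Bool) (d : ℕ → ℕ)
    (y : Fin m' → List (Fin m × Bool)) (w : List (Fin m × Bool)) : Bool :=
  (wordsOfLengthLE (d w.length)).any fun w' => wp (wordInv (expandWord y w') ++ w)

theorem computable_shortWordSearch {wp : List (Fin m × Bool) → Bool} {d : ℕ → ℕ}
    (hwp : Computable wp) (hd : Computable d) (y : Fin m' → List (Fin m × Bool)) :
    Computable (shortWordSearch wp d y) :=
  Computable.list_any (primrec_wordsOfLengthLE.to_comp.comp (hd.comp .list_length)) <|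
    hwp.comp (Primrec.list_append.comp
      (primrec_wordInv.comp ((primrec_expandWord y).comp Primrec.snd)) Primrec.fst).to_comp |>.to₂

theorem shortWordSearch_eq_true_iff {G : Type*} [Group G] {x : Fin m → G}
    {wp : List (Fin m × Bool) → Bool} (hwp : ∀ w, wp w = true ↔ evalWord x w = 1) (d : ℕ → ℕ)
    (y : Fin m' → List (Fin m × Bool)) (w : List (Fin m × Bool)) :
    shortWordSearch wp d y w = true ↔ ∃ w' : List (Fin m' × Bool), w'.length ≤ d w.length ∧
      evalWord (fun i => evalWord x (y i)) w' = evalWord x w := by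
  simp only [shortWordSearch, List.any_eq_true, mem_wordsOfLengthLE, hwp, evalWord_append,
    evalWord_wordInv, evalWord_expandWord, inv_mul_eq_one]

end Search

theorem stmt10_general {G : Type*} [Group G] (H : Subgroup G) (m : ℕ) (x : Fin m → G)
    (m' : ℕ) (y : Fin m' → List (Fin m × Bool))
    (hHY : H ≤ Subgroup.closure (Set.range fun i => evalWord x (y i)))
    -- decidable word problem for G
    (wp : List (Fin m × Bool) → Bool) (hwpComp : Computable wp)
    (hwp : ∀ w, wp w = true ↔ evalWord x w = 1)
    -- a computable function agreeing with the distortion function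
    (d : ℕ → ℕ) (hdComp : Computable d)
    (hd : ∀ n, d n = distortion (Set.range x) (Set.range fun i => evalWord x (y i)) H n) :
    -- a word w over X represents an element of H only if some word w' over Y of length
    -- at most Dist(|w|) represents the same element ...
    (∀ w : List (Fin m × Bool), evalWord x w ∈ H →
        ∃ w' : List (Fin m' × Bool), w'.length ≤ d w.length ∧
          evalWord (fun i => evalWord x (y i)) w' = evalWord x w) ∧
    -- ... and in particular, if H = ⟨Y⟩ then membership in H is decidable
    (Subgroup.closure (Set.range fun i => evalWord x (y i)) = H →
        ∃ mp : List (Fin m × Bool) → Bool, Computable mp ∧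
          ∀ w, mp w = true ↔ evalWord x w ∈ H) := by
  have hYX : Subgroup.closure (Set.range fun i => evalWord x (y i)) ≤
      Subgroup.closure (Set.range x) :=
    Subgroup.closure_le _ |>.2 <| Set.range_subset_iff.2 fun i => evalWord_mem_closure x (y i)
  have hshort : ∀ w : List (Fin m × Bool), evalWord x w ∈ H →
      ∃ w' : List (Fin m' × Bool), w'.length ≤ d w.length ∧
        evalWord (fun i => evalWord x (y i)) w' = evalWord x w := fun w hw => by
    simpa only [hd] using exists_evalWord_eq_length_le_distortion x _ (hHY.trans hYX) hHY hw
  refine ⟨hshort, fun hYH => ⟨shortWordSearch wp d y, computable_shortWordSearch hwpComp hdComp y,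
    fun w => (shortWordSearch_eq_true_iff hwp d y w).trans ⟨?_, hshort w⟩⟩⟩
  rintro ⟨w', -, hw'⟩
  exact hw' ▸ hYH ▸ evalWord_mem_closure _ w'

theorem stmt10 {G : Type*} [Group G] (H : Subgroup G) (m : ℕ) (x : Fin m → G)
    (hX : Subgroup.closure (Set.range x) = ⊤)
    (m' : ℕ) (y : Fin m' → List (Fin m × Bool))
    (hHY : H ≤ Subgroup.closure (Set.range fun i => evalWord x (y i)))
    -- decidable word problem for G
    (wp : List (Fin m × Bool) → Bool) (hwpComp : Computable wp)
    (hwp : ∀ w, wp w = true ↔ evalWord x w = 1)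
    -- a computable function agreeing with the distortion function
    (d : ℕ → ℕ) (hdComp : Computable d)
    (hd : ∀ n, d n = distortion (Set.range x) (Set.range fun i => evalWord x (y i)) H n) :
    -- a word w over X represents an element of H only if some word w' over Y of length
    -- at most Dist(|w|) represents the same element ...
    (∀ w : List (Fin m × Bool), evalWord x w ∈ H →
        ∃ w' : List (Fin m' × Bool), w'.length ≤ d w.length ∧
          evalWord (fun i => evalWord x (y i)) w' = evalWord x w) ∧
    -- ... and in particular, if H = ⟨Y⟩ then membership in H is decidable
    (Subgroup.closure (Set.range fun i => evalWord x (y i)) = H →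
        ∃ mp : List (Fin m × Bool) → Bool, Computable mp ∧
          ∀ w, mp w = true ↔ evalWord x w ∈ H) :=
  stmt10_general H m x m' y hHY wp hwpComp hwp d hdComp hd
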